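/- In the sparse regime, the extremes test is asymptotically powerless below its own boundary: if ε_n = n^{-β} with β ∈ (0,1) fixed and ρ_n = 1 − n^{-γ} with γ > 0 fixed such that γ < 2β, then for every sequence of thresholds (t_n), the sum of the type I and type II error probabilities of the test rejecting when min_{1≤i≤n} |U_i| ≤ t_n, where U_i := (X_i − Y_i)/√2, has liminf at least 1. -/

import Mathlib

open MeasureTheory ProbabilityTheory Real Filter Topology

noncomputable section

/-- The standard normal distribution on ℝ. -/
def stdGauss : Measure ℝ := gaussianReal 0 1

/-- Two independent standard normals. -/
def stdGauss2 : Measure (ℝ × ℝ) := stdGauss.prod stdGauss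

/-- `N(0, Σ_ρ)`: the centered bivariate normal with unit marginal variances and
correlation `ρ`, i.e. the law of `(Z₁, ρ Z₁ + √(1-ρ²) Z₂)` for independent standard
normal `Z₁, Z₂`. -/
def biNormal (ρ : ℝ) : Measure (ℝ × ℝ) :=
  stdGauss2.map fun z => (z.1, ρ * z.1 + Real.sqrt (1 - ρ ^ 2) * z.2)

/-- The contamination mixture `P_{ε,ρ} = (1-ε) N(0,Σ₀) + ε N(0,Σ_ρ)`. -/
def mixture (ε ρ : ℝ) : Measure (ℝ × ℝ) :=
  ENNReal.ofReal (1 - ε) • biNormal 0 + ENNReal.ofReal ε • biNormal ρ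

/-- The `n`-fold product (i.i.d.) measure. -/
def iid (n : ℕ) (μ : Measure (ℝ × ℝ)) : Measure (Fin n → ℝ × ℝ) :=
  Measure.pi fun _ => μ
/-- The pairwise differences `Uᵢ = (Xᵢ - Yᵢ)/√2`. -/
def pairDiff (n : ℕ) (x : Fin n → ℝ × ℝ) (i : Fin n) : ℝ :=
  ((x i).1 - (x i).2) / Real.sqrt 2

/-- The rejection region of the extremes test: `min_{1 ≤ i ≤ n} |Uᵢ| ≤ t`
(equivalently, some `|Uᵢ| ≤ t`). -/
def extremesReject (n : ℕ) (t : ℝ) : Set (Fin n → ℝ × ℝ) :=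
  {x | ∃ i : Fin n, |pairDiff n x i| ≤ t}

/-!
Let `x` and `y` be the probabilities that a single pair does *not* trigger the test under
`N(0,Σ₀)` and under `N(0,Σ_ρ)`. The sum of the two errors is `1 - (xⁿ - ((1-ε)x + εy)ⁿ)`,
and the gap `xⁿ - ((1-ε)x + εy)ⁿ` is at most both `n ε (1 - y)` and `xⁿ ≤ exp (-n (1 - x))`.
Under `N(0,Σ_ρ)` the difference `U = (X - Y)/√2` is `N(0, 1-ρ)`, so `1 - y ≤ t / √(1-ρ)`;
under the null it is `N(0,1)`, so `1 - x ≥ t / 4` for `t ≤ 1`. With `δ = β - γ/2 > 0` and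
the scale `τ = n^{-(1-δ/2)}`, a threshold `t ≤ τ` makes the gap at most
`n ε τ / √(1-ρ) = n^{-δ/2}`, and a threshold `t > τ` makes it at most
`exp (-n τ / 4) = exp (-n^{δ/2} / 4)`.
-/

open Set Metric
open scoped NNReal ENNReal

lemma pow_sub_pow_le_mul_sub {x y : ℝ} (n : ℕ) (hy : 0 ≤ y) (hyx : y ≤ x) (hx : x ≤ 1) :
    x ^ n - y ^ n ≤ n * (x - y) := by
  have hmax : max |x| |y| ^ (n - 1) ≤ 1 :=
    pow_le_one₀ (le_max_of_le_right (abs_nonneg y))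
      (max_le ((abs_of_nonneg (hy.trans hyx)).le.trans hx)
        ((abs_of_nonneg hy).le.trans (hyx.trans hx)))
  calc x ^ n - y ^ n ≤ |x ^ n - y ^ n| := le_abs_self _
    _ ≤ |x - y| * n * max |x| |y| ^ (n - 1) := abs_pow_sub_pow_le ..
    _ ≤ |x - y| * n := mul_le_of_le_one_right (by positivity) hmax
    _ = n * (x - y) := by rw [abs_of_nonneg (sub_nonneg.mpr hyx), mul_comm]

lemma pow_sub_convexComb_pow_le {x y ε : ℝ} (n : ℕ) (hx0 : 0 ≤ x) (hx1 : x ≤ 1) (hy0 : 0 ≤ y)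
    (hy1 : y ≤ 1) (hε0 : 0 ≤ ε) (hε1 : ε ≤ 1) :
    x ^ n - ((1 - ε) * x + ε * y) ^ n ≤ n * ε * (1 - y) := by
  have hm0 : 0 ≤ (1 - ε) * x + ε * y := by nlinarith
  rcases le_total ((1 - ε) * x + ε * y) x with hmx | hxm
  · calc x ^ n - ((1 - ε) * x + ε * y) ^ n ≤ n * (x - ((1 - ε) * x + ε * y)) :=
          pow_sub_pow_le_mul_sub n hm0 hmx hx1
      _ = n * ε * (x - y) := by ring
      _ ≤ n * ε * (1 - y) := by gcongr
  · have : x ^ n ≤ ((1 - ε) * x + ε * y) ^ n := pow_le_pow_left₀ hx0 hxm n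
    have : 0 ≤ n * ε * (1 - y) := mul_nonneg (by positivity) (by nlinarith)
    linarith

lemma one_sub_pow_le_exp_neg_mul {q : ℝ} (n : ℕ) (hq : q ≤ 1) :
    (1 - q) ^ n ≤ exp (-(n * q)) := by
  rw [← mul_neg, exp_nat_mul]
  exact pow_le_pow_left₀ (sub_nonneg.mpr hq) (one_sub_le_exp_neg q) n

namespace ProbabilityTheory

lemma gaussianPDFReal_le_inv_sqrt (μ : ℝ) (v : ℝ≥0) (x : ℝ) :
    gaussianPDFReal μ v x ≤ (√(2 * π * v))⁻¹ := by
  rw [gaussianPDFReal_def]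
  refine mul_le_of_le_one_right (by positivity) (exp_le_one_iff.mpr ?_)
  exact div_nonpos_of_nonpos_of_nonneg (neg_nonpos.mpr (sq_nonneg _)) (by positivity)

lemma inv_eight_le_gaussianPDFReal {x : ℝ} (hx : |x| ≤ 1) : 1 / 8 ≤ gaussianPDFReal 0 1 x := by
  have hsqrt : √(2 * π) ≤ 4 := by
    rw [sqrt_le_left (by norm_num)]; nlinarith [pi_le_four]
  have hexp : 1 / 2 ≤ rexp (-x ^ 2 / 2) := by
    have : x ^ 2 ≤ 1 := by nlinarith [sq_abs x, abs_nonneg x]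
    linarith [add_one_le_exp (-x ^ 2 / 2)]
  simp only [gaussianPDFReal_def, sub_zero, NNReal.coe_one, mul_one]
  calc (1 : ℝ) / 8 = 4⁻¹ * (1 / 2) := by norm_num
    _ ≤ (√(2 * π))⁻¹ * rexp (-x ^ 2 / 2) := by gcongr

lemma gaussianReal_real_closedBall_le (μ : ℝ) {v : ℝ≥0} (hv : v ≠ 0) {t : ℝ} (ht : 0 ≤ t) :
    (gaussianReal μ v).real (closedBall μ t) ≤ t / √v := by
  have hsqrt : 2 * √v ≤ √(2 * π * v) := by
    rw [sqrt_mul (by positivity), sqrt_mul zero_le_two]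
    have : 2 ≤ √2 * √π := by
      rw [← sqrt_mul zero_le_two, le_sqrt zero_le_two (by positivity)]; nlinarith [pi_gt_three]
    exact mul_le_mul_of_nonneg_right this (sqrt_nonneg _)
  have hv' : 0 < √v := sqrt_pos.mpr (by positivity)
  have hbound :
      gaussianReal μ v (closedBall μ t) ≤ ENNReal.ofReal ((√(2 * π * v))⁻¹ * (2 * t)) := by
    rw [gaussianReal_apply μ hv, ENNReal.ofReal_mul (by positivity), ← volume_closedBall]
    calc ∫⁻ x in closedBall μ t, gaussianPDF μ v x
        ≤ ∫⁻ _ in closedBall μ t, ENNReal.ofReal (√(2 * π * v))⁻¹ :=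
          setLIntegral_mono' measurableSet_closedBall fun x _ =>
            ENNReal.ofReal_le_ofReal (gaussianPDFReal_le_inv_sqrt μ v x)
      _ = _ := setLIntegral_const _ _
  calc (gaussianReal μ v).real (closedBall μ t)
      ≤ (√(2 * π * v))⁻¹ * (2 * t) := ENNReal.toReal_le_of_le_ofReal (by positivity) hbound
    _ ≤ t / √v := by
      rw [inv_mul_eq_div, div_le_div_iff₀ (by positivity) hv']
      nlinarith

lemma le_gaussianReal_real_closedBall {t : ℝ} (ht : t ≤ 1) :
    t / 4 ≤ (gaussianReal 0 1).real (closedBall 0 t) := by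
  have hbound : ENNReal.ofReal (1 / 8 * (2 * t)) ≤ gaussianReal 0 1 (closedBall 0 t) := by
    rw [gaussianReal_apply 0 one_ne_zero, ENNReal.ofReal_mul (by positivity),
      ← volume_closedBall, ← setLIntegral_const]
    refine setLIntegral_mono' measurableSet_closedBall fun x hx => ENNReal.ofReal_le_ofReal ?_
    refine inv_eight_le_gaussianPDFReal ?_
    rw [mem_closedBall, dist_zero_right, norm_eq_abs] at hx
    linarith [abs_nonneg x]
  calc t / 4 = 1 / 8 * (2 * t) := by ring
    _ ≤ _ := (ENNReal.ofReal_le_iff_le_toReal (measure_ne_top _ _)).mp hbound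

lemma gaussianReal_prod_map_linear (a b : ℝ) :
    ((gaussianReal 0 1).prod (gaussianReal 0 1)).map (fun z => a * z.1 + b * z.2)
      = gaussianReal 0 (a ^ 2 + b ^ 2).toNNReal := by
  have hsplit : (fun z : ℝ × ℝ => a * z.1 + b * z.2)
      = (fun z : ℝ × ℝ => z.1 + z.2) ∘ Prod.map (a * ·) (b * ·) := rfl
  rw [hsplit, ← Measure.map_map (by fun_prop) (by fun_prop),
    ← Measure.map_prod_map _ _ (by fun_prop) (by fun_prop),
    gaussianReal_map_const_mul, gaussianReal_map_const_mul]
  change Measure.conv _ _ = _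
  rw [gaussianReal_conv_gaussianReal]
  congr 1
  · ring
  · ext
    simp [Real.coe_toNNReal _ (by positivity : 0 ≤ a ^ 2 + b ^ 2)]

end ProbabilityTheory

lemma biNormal_map_sub_div_sqrt_two {ρ : ℝ} (h0 : -1 ≤ ρ) (h1 : ρ ≤ 1) :
    (biNormal ρ).map (fun p => (p.1 - p.2) / √2) = gaussianReal 0 (1 - ρ).toNNReal := by
  have hcomp : (fun p : ℝ × ℝ => (p.1 - p.2) / √2) ∘
        (fun z : ℝ × ℝ => (z.1, ρ * z.1 + √(1 - ρ ^ 2) * z.2))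
      = fun z => (1 - ρ) / √2 * z.1 + (-√(1 - ρ ^ 2) / √2) * z.2 := by
    ext z; simp only [Function.comp_apply]; ring
  rw [biNormal, Measure.map_map (by fun_prop) (by fun_prop), hcomp]
  refine (gaussianReal_prod_map_linear _ _).trans (congrArg _ ?_)
  rw [Real.toNNReal_eq_toNNReal_iff (by positivity) (sub_nonneg.mpr h1)]
  have hsq : √(1 - ρ ^ 2) ^ 2 = 1 - ρ ^ 2 := sq_sqrt (by nlinarith)
  rw [div_pow, div_pow, neg_sq, hsq, sq_sqrt zero_le_two]
  ring

def pairReject (t : ℝ) : Set (ℝ × ℝ) :=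
  (fun p => (p.1 - p.2) / √2) ⁻¹' closedBall 0 t

lemma measurableSet_pairReject (t : ℝ) : MeasurableSet (pairReject t) :=
  measurableSet_closedBall.preimage (by fun_prop)

lemma biNormal_real_pairReject {ρ : ℝ} (h0 : -1 ≤ ρ) (h1 : ρ ≤ 1) (t : ℝ) :
    (biNormal ρ).real (pairReject t)
      = (gaussianReal 0 (1 - ρ).toNNReal).real (closedBall 0 t) := by
  rw [← biNormal_map_sub_div_sqrt_two h0 h1, map_measureReal_apply (by fun_prop)
    measurableSet_closedBall, pairReject]

lemma biNormal_real_pairReject_le {ρ t : ℝ} (h0 : -1 ≤ ρ) (h1 : ρ < 1) (ht : 0 ≤ t) :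
    (biNormal ρ).real (pairReject t) ≤ t / √(1 - ρ) := by
  rw [biNormal_real_pairReject h0 h1.le]
  have hv : (1 - ρ).toNNReal ≠ 0 := by simpa using h1
  simpa [Real.coe_toNNReal _ (sub_nonneg.mpr h1.le)] using
    gaussianReal_real_closedBall_le 0 hv ht

lemma le_biNormal_zero_real_pairReject {t : ℝ} (ht : t ≤ 1) :
    t / 4 ≤ (biNormal 0).real (pairReject t) := by
  simpa [biNormal_real_pairReject (ρ := 0) (by norm_num) zero_le_one] using
    le_gaussianReal_real_closedBall ht

lemma pairReject_mono {s t : ℝ} (h : s ≤ t) : pairReject s ⊆ pairReject t :=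
  preimage_mono (closedBall_subset_closedBall h)

instance (ρ : ℝ) : IsProbabilityMeasure (biNormal ρ) := by
  unfold biNormal stdGauss2 stdGauss
  exact Measure.isProbabilityMeasure_map (by fun_prop)

instance (n : ℕ) (μ : Measure (ℝ × ℝ)) [IsProbabilityMeasure μ] :
    IsProbabilityMeasure (iid n μ) := by
  unfold iid; infer_instance

lemma mixture_real_apply {ε : ℝ} (hε0 : 0 ≤ ε) (hε1 : ε ≤ 1) (ρ : ℝ) (s : Set (ℝ × ℝ)) :
    (mixture ε ρ).real s = (1 - ε) * (biNormal 0).real s + ε * (biNormal ρ).real s := by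
  simp only [mixture, measureReal_def, Measure.add_apply, Measure.smul_apply, smul_eq_mul]
  rw [ENNReal.toReal_add (by finiteness) (by finiteness), ENNReal.toReal_mul, ENNReal.toReal_mul,
    ENNReal.toReal_ofReal (sub_nonneg.mpr hε1), ENNReal.toReal_ofReal hε0]

lemma isProbabilityMeasure_mixture {ε : ℝ} (hε0 : 0 ≤ ε) (hε1 : ε ≤ 1) (ρ : ℝ) :
    IsProbabilityMeasure (mixture ε ρ) := by
  constructor
  simp only [mixture, Measure.add_apply, Measure.smul_apply, measure_univ, smul_eq_mul, mul_one]
  rw [← ENNReal.ofReal_add (sub_nonneg.mpr hε1) hε0, sub_add_cancel, ENNReal.ofReal_one]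

lemma extremesReject_compl (n : ℕ) (t : ℝ) :
    (extremesReject n t)ᶜ = univ.pi fun _ => (pairReject t)ᶜ := by
  ext x
  simp only [extremesReject, pairReject, pairDiff, mem_compl_iff, mem_ofPred_eq, not_exists,
    Set.mem_pi, mem_univ, true_implies, mem_preimage, mem_closedBall, dist_zero_right,
    norm_eq_abs]

lemma iid_real_extremesReject (n : ℕ) (μ : Measure (ℝ × ℝ)) [IsProbabilityMeasure μ] (t : ℝ) :
    (iid n μ).real (extremesReject n t) = 1 - μ.real (pairReject t)ᶜ ^ n := by
  have hcompl : (iid n μ).real (extremesReject n t)ᶜ = μ.real (pairReject t)ᶜ ^ n := by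
    simp [extremesReject_compl, iid, measureReal_def, Measure.pi_pi]
  have hmeas : MeasurableSet (extremesReject n t) := by
    rw [← compl_compl (extremesReject n t), extremesReject_compl]
    exact (MeasurableSet.univ_pi fun _ => (measurableSet_pairReject t).compl).compl
  rw [← hcompl, probReal_compl_eq_one_sub hmeas, sub_sub_cancel]

def extremesErrorSum (n : ℕ) (ε ρ t : ℝ) : ℝ :=
  (iid n (biNormal 0)).real (extremesReject n t)
    + (1 - (iid n (mixture ε ρ)).real (extremesReject n t))

lemma extremesErrorSum_eq {ε : ℝ} (hε0 : 0 ≤ ε) (hε1 : ε ≤ 1) (n : ℕ) (ρ t : ℝ) :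
    extremesErrorSum n ε ρ t = 1 - ((biNormal 0).real (pairReject t)ᶜ ^ n
      - ((1 - ε) * (biNormal 0).real (pairReject t)ᶜ
        + ε * (biNormal ρ).real (pairReject t)ᶜ) ^ n) := by
  have := isProbabilityMeasure_mixture hε0 hε1 ρ
  rw [extremesErrorSum, iid_real_extremesReject, iid_real_extremesReject,
    mixture_real_apply hε0 hε1]
  ring

lemma extremesErrorSum_le_two (n : ℕ) (ε ρ t : ℝ) : extremesErrorSum n ε ρ t ≤ 2 := by
  have h₁ : (iid n (biNormal 0)).real (extremesReject n t) ≤ 1 := measureReal_le_one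
  have h₂ : 0 ≤ (iid n (mixture ε ρ)).real (extremesReject n t) := measureReal_nonneg
  rw [extremesErrorSum]
  linarith

lemma one_sub_le_extremesErrorSum (n : ℕ) {ε ρ τ : ℝ} (hε0 : 0 ≤ ε) (hε1 : ε ≤ 1)
    (hρ0 : -1 ≤ ρ) (hρ1 : ρ < 1) (hτ0 : 0 ≤ τ) (hτ1 : τ ≤ 1) (t : ℝ) :
    1 - (n * ε * (τ / √(1 - ρ)) + exp (-(n * (τ / 4)))) ≤ extremesErrorSum n ε ρ t := by
  rw [extremesErrorSum_eq hε0 hε1]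
  set x := (biNormal 0).real (pairReject t)ᶜ
  set y := (biNormal ρ).real (pairReject t)ᶜ
  have hx : x = 1 - (biNormal 0).real (pairReject t) :=
    probReal_compl_eq_one_sub (measurableSet_pairReject t)
  have hy : y = 1 - (biNormal ρ).real (pairReject t) :=
    probReal_compl_eq_one_sub (measurableSet_pairReject t)
  suffices
      x ^ n - ((1 - ε) * x + ε * y) ^ n ≤ n * ε * (τ / √(1 - ρ)) + exp (-(n * (τ / 4))) by
    linarith
  rcases le_or_gt t τ with htτ | hτt
  · -- a threshold below `τ` is rarely reached even by the contaminated pairs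
    have hp : 1 - y ≤ τ / √(1 - ρ) := calc
      1 - y = (biNormal ρ).real (pairReject t) := by rw [hy, sub_sub_cancel]
      _ ≤ (biNormal ρ).real (pairReject τ) := measureReal_mono (pairReject_mono htτ)
      _ ≤ τ / √(1 - ρ) := biNormal_real_pairReject_le hρ0 hρ1 hτ0
    calc x ^ n - ((1 - ε) * x + ε * y) ^ n ≤ n * ε * (1 - y) :=
          pow_sub_convexComb_pow_le n measureReal_nonneg measureReal_le_one measureReal_nonneg
            measureReal_le_one hε0 hε1
      _ ≤ n * ε * (τ / √(1 - ρ)) := by gcongr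
      _ ≤ _ := le_add_of_nonneg_right (exp_pos _).le
  · -- a threshold above `τ` is reached under the null by some of the `n` pairs
    have hq : τ / 4 ≤ 1 - x := calc
      τ / 4 ≤ (biNormal 0).real (pairReject τ) := le_biNormal_zero_real_pairReject hτ1
      _ ≤ (biNormal 0).real (pairReject t) := measureReal_mono (pairReject_mono hτt.le)
      _ = 1 - x := by rw [hx, sub_sub_cancel]
    have hm0 : 0 ≤ (1 - ε) * x + ε * y :=
      add_nonneg (mul_nonneg (sub_nonneg.mpr hε1) measureReal_nonneg)
        (mul_nonneg hε0 measureReal_nonneg)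
    calc x ^ n - ((1 - ε) * x + ε * y) ^ n ≤ x ^ n := sub_le_self _ (pow_nonneg hm0 n)
      _ = (1 - (1 - x)) ^ n := by rw [sub_sub_cancel]
      _ ≤ exp (-(n * (1 - x))) :=
          one_sub_pow_le_exp_neg_mul n (sub_le_self 1 measureReal_nonneg)
      _ ≤ exp (-(n * (τ / 4))) := by gcongr
      _ ≤ _ := le_add_of_nonneg_left (by positivity)

lemma one_sub_le_extremesErrorSum_rpow {β γ : ℝ} (hβ1 : β < 1) (hγ0 : 0 < γ) (hγ : γ < 2 * β)
    {n : ℕ} (hn : 1 ≤ n) (t : ℝ) :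
    1 - ((n : ℝ) ^ (-((β - γ / 2) / 2)) + exp (-((n : ℝ) ^ ((β - γ / 2) / 2) / 4)))
      ≤ extremesErrorSum n ((n : ℝ) ^ (-β)) (1 - (n : ℝ) ^ (-γ)) t := by
  have hn0 : (0 : ℝ) < n := by exact_mod_cast hn
  have hn1 : (1 : ℝ) ≤ n := by exact_mod_cast hn
  have hle_one {a : ℝ} (ha : 0 ≤ a) : (n : ℝ) ^ (-a) ≤ 1 :=
    rpow_le_one_of_one_le_of_nonpos hn1 (neg_nonpos.mpr ha)
  have key := one_sub_le_extremesErrorSum n (ε := (n : ℝ) ^ (-β)) (ρ := 1 - (n : ℝ) ^ (-γ))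
    (τ := (n : ℝ) ^ (-(1 - (β - γ / 2) / 2)))
    (rpow_nonneg hn0.le _) (hle_one (by linarith)) (by linarith [hle_one hγ0.le])
    (by linarith [rpow_pos_of_pos hn0 (-γ)]) (rpow_nonneg hn0.le _) (hle_one (by linarith)) t
  have hcontam : (n : ℝ) * (n : ℝ) ^ (-β) *
      ((n : ℝ) ^ (-(1 - (β - γ / 2) / 2)) / √(1 - (1 - (n : ℝ) ^ (-γ))))
      = (n : ℝ) ^ (-((β - γ / 2) / 2)) := calc
    _ = (n : ℝ) ^ (-β + -(1 - (β - γ / 2) / 2) - -γ * (1 / 2) + 1) := by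
      rw [sub_sub_cancel, sqrt_eq_rpow, ← rpow_mul hn0.le, rpow_add_one hn0.ne', rpow_sub hn0,
        rpow_add hn0]
      ring
    _ = _ := by ring_nf
  have hnull : (n : ℝ) * ((n : ℝ) ^ (-(1 - (β - γ / 2) / 2)) / 4)
      = (n : ℝ) ^ ((β - γ / 2) / 2) / 4 := by
    rw [mul_div_assoc', ← rpow_one_add' hn0.le (by linarith)]
    ring_nf
  rwa [hcontam, hnull] at key

lemma tendsto_rpow_neg_add_exp_neg_rpow {a : ℝ} (ha : 0 < a) :
    Tendsto (fun n : ℕ => (n : ℝ) ^ (-a) + exp (-((n : ℝ) ^ a / 4))) atTop (𝓝 0) := by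
  have h₁ : Tendsto (fun n : ℕ => (n : ℝ) ^ (-a)) atTop (𝓝 0) :=
    (tendsto_rpow_neg_atTop ha).comp tendsto_natCast_atTop_atTop
  have h₂ : Tendsto (fun n : ℕ => exp (-((n : ℝ) ^ a / 4))) atTop (𝓝 0) :=
    tendsto_exp_atBot.comp <| tendsto_neg_atTop_atBot.comp <|
      ((tendsto_rpow_atTop ha).comp tendsto_natCast_atTop_atTop).atTop_div_const four_pos
  simpa using h₁.add h₂

lemma le_liminf_of_eventually_sub_le {ι : Type*} {l : Filter ι} [l.NeBot] {u D : ι → ℝ}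
    {a b : ℝ} (hD : Tendsto D l (𝓝 0)) (hu : ∀ᶠ i in l, a - D i ≤ u i) (hb : ∀ i, u i ≤ b) :
    a ≤ liminf u l := by
  have h : Tendsto (fun i => a - D i) l (𝓝 a) := by simpa using hD.const_sub a
  calc a = liminf (fun i => a - D i) l := h.liminf_eq.symm
    _ ≤ liminf u l := liminf_le_liminf hu h.isBoundedUnder_ge (isCoboundedUnder_ge_of_le l hb)

theorem extremes_powerless_general (β γ : ℝ) (hβ1 : β < 1) (hγ0 : 0 < γ)
    (hγ : γ < 2 * β)
    (ε ρ : ℕ → ℝ) (hε : ∀ n : ℕ, ε n = (n : ℝ) ^ (-β))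
    (hρ : ∀ n : ℕ, ρ n = 1 - (n : ℝ) ^ (-γ)) :
    ∀ t : ℕ → ℝ,
      1 ≤ Filter.liminf (fun n =>
        ((iid n (biNormal 0)) (extremesReject n (t n))).toReal
          + (1 - ((iid n (mixture (ε n) (ρ n))) (extremesReject n (t n))).toReal)) atTop := by
  intro t
  change 1 ≤ liminf (fun n => extremesErrorSum n (ε n) (ρ n) (t n)) atTop
  refine le_liminf_of_eventually_sub_le
    (tendsto_rpow_neg_add_exp_neg_rpow (a := (β - γ / 2) / 2) (by linarith)) ?_
    fun n => extremesErrorSum_le_two n _ _ _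
  filter_upwards [eventually_ge_atTop 1] with n hn
  simpa only [hε, hρ] using one_sub_le_extremesErrorSum_rpow hβ1 hγ0 hγ hn (t n)

/-- in the sparse regime with `γ < 2β`, the extremes test is asymptotically
powerless for any choice of thresholds `(tₙ)`. -/
theorem extremes_powerless (β γ : ℝ) (hβ0 : 0 < β) (hβ1 : β < 1) (hγ0 : 0 < γ)
    (hγ : γ < 2 * β)
    (ε ρ : ℕ → ℝ) (hε : ∀ n : ℕ, ε n = (n : ℝ) ^ (-β))
    (hρ : ∀ n : ℕ, ρ n = 1 - (n : ℝ) ^ (-γ)) :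
    ∀ t : ℕ → ℝ,
      1 ≤ Filter.liminf (fun n =>
        ((iid n (biNormal 0)) (extremesReject n (t n))).toReal
          + (1 - ((iid n (mixture (ε n) (ρ n))) (extremesReject n (t n))).toReal)) atTop :=
  extremes_powerless_general β γ hβ1 hγ0 hγ ε ρ hε hρ
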